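/- Let R = {0,b₁}×⋯×{0,bₛ} ⊆ ℝˢ be a cuboid, and let a₁,…,aₜ be positive reals with aᵢ ≤ min{b₁,…,bₛ} for each i. Then there exist a positive integer N and a configuration S ⊆ ℝᴺ such that every colouring of S (with arbitrarily many colours) admits either a monochromatic copy of the cuboid {0,a₁}×⋯×{0,aₜ} or a rainbow copy of R. -/

import Mathlib

/-- A copy of a configuration `C ⊆ ℝˢ` in `ℝⁿ`: the image of `C` under a
distance-preserving map `ℝˢ → ℝⁿ`. -/
def IsCopy {s n : ℕ} (C : Set (EuclideanSpace ℝ (Fin s)))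
    (X : Set (EuclideanSpace ℝ (Fin n))) : Prop :=
  ∃ f : EuclideanSpace ℝ (Fin s) → EuclideanSpace ℝ (Fin n), Isometry f ∧ X = f '' C

/-- A set `X` is monochromatic under a colouring `χ` if all its points receive
the same colour. -/
def Monochromatic {α κ : Type*} (χ : α → κ) (X : Set α) : Prop :=
  ∀ x ∈ X, ∀ y ∈ X, χ x = χ y

/-- A set `X` is rainbow under a colouring `χ` if all its points receive
pairwise distinct colours. -/
def RainbowSet {α κ : Type*} (χ : α → κ) (X : Set α) : Prop :=
  Set.InjOn χ X

/-- The cuboid `{0, b 0} × ⋯ × {0, b (s-1)} ⊆ ℝˢ`. -/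
def cuboid {s : ℕ} (b : Fin s → ℝ) : Set (EuclideanSpace ℝ (Fin s)) :=
  {x | ∀ i, x i = 0 ∨ x i = b i}

/-- A configuration is canonically Ramsey if some `ℝⁿ` admits, for every colouring
with arbitrarily many colours, a monochromatic or rainbow copy of it. -/
def CanonicallyRamsey {s : ℕ} (C : Set (EuclideanSpace ℝ (Fin s))) : Prop :=
  ∃ n : ℕ, 0 < n ∧ ∀ (κ : Type) (χ : EuclideanSpace ℝ (Fin n) → κ),
    ∃ X : Set (EuclideanSpace ℝ (Fin n)), IsCopy C X ∧ (Monochromatic χ X ∨ RainbowSet χ X)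

/-- A configuration is Ramsey if for every number of colours `r` there is `n` such
that every `r`-colouring of `ℝⁿ` admits a monochromatic copy of it. -/
def IsRamsey {s : ℕ} (C : Set (EuclideanSpace ℝ (Fin s))) : Prop :=
  ∀ r : ℕ, 0 < r → ∃ n : ℕ, ∀ χ : EuclideanSpace ℝ (Fin n) → Fin r,
    ∃ X : Set (EuclideanSpace ℝ (Fin n)), IsCopy C X ∧ Monochromatic χ X

/-!
Induction on `t`. Along with the colouring `χ` we carry an auxiliary colouring `χ₀` with finitely
many colours, and ask for a copy of `{0,a₁} × ⋯ × {0,aₜ}` monochromatic for both, or a copy of `R`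
monochromatic for `χ₀` and rainbow for `χ`. This property passes from `S₁` and `S₂` to
`S₁ × S₂ ⊆ ℝ^(N₁ + N₂)` for the product cuboid: if some fibre `{x} × S₂` contains the rainbow
`R`, we are done; otherwise each fibre has a doubly monochromatic copy `Y x`, and recording `Y x`
and its colour in the auxiliary colouring of `S₁` makes the copy found in `S₁` extend to the
product.

For one side `α ≤ min bⱼ` we take a grid with coordinates `(j, false)`, `(j, true)` of weights
`bⱼ² - α²` and `α²`: changing the coordinate `(j, true)` is a step of length `α`, while switching
all of block `j` is a step of length `bⱼ`, so the combinatorial cuboids of the grid are copies of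
`R`. A product pigeonhole makes `χ₀` constant on a large subgrid. If no `α`-step there is
monochromatic, `χ` is injective along the lines in the directions `(j, true)`, and counting shows
that some combinatorial cuboid is rainbow.
-/

open Set
open scoped Finset

local notation "𝔼" n => EuclideanSpace ℝ (Fin n)

namespace EuclideanSpace

noncomputable def append {m n : ℕ} (x : 𝔼 m) (y : 𝔼 n) : 𝔼 (m + n) :=
  WithLp.toLp 2 (Fin.append x.ofLp y.ofLp)

lemma dist_append_sq {m n : ℕ} (x x' : 𝔼 m) (y y' : 𝔼 n) :
    dist (append x y) (append x' y') ^ 2 = dist x x' ^ 2 + dist y y' ^ 2 := by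
  simp only [EuclideanSpace.dist_eq, Fin.sum_univ_add, append, Fin.append_left, Fin.append_right]
  rw [Real.sq_sqrt (by positivity), Real.sq_sqrt (by positivity), Real.sq_sqrt (by positivity)]

lemma isometry_append_left {m n : ℕ} (y : 𝔼 n) : Isometry (fun x : 𝔼 m => append x y) :=
  Isometry.of_dist_eq fun x x' => by
    rw [← sq_eq_sq₀ dist_nonneg dist_nonneg, dist_append_sq, dist_self]; ring

lemma isometry_append_right {m n : ℕ} (x : 𝔼 m) : Isometry (fun y : 𝔼 n => append x y) :=
  Isometry.of_dist_eq fun y y' => by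
    rw [← sq_eq_sq₀ dist_nonneg dist_nonneg, dist_append_sq, dist_self]; ring

lemma exists_append_eq {m n : ℕ} (z : 𝔼 (m + n)) : ∃ x y, append x y = z :=
  ⟨WithLp.toLp 2 fun i => z (Fin.castAdd n i), WithLp.toLp 2 fun i => z (Fin.natAdd m i),
    by simp [append, Fin.append_castAdd_natAdd]⟩

lemma append_injective2 {m n : ℕ} : Function.Injective2 (append : (𝔼 m) → (𝔼 n) → _) := by
  intro x x' y y' h
  obtain ⟨hx, hy⟩ := Prod.mk.inj ((Fin.appendEquiv m n).injective (congrArg WithLp.ofLp h))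
  exact ⟨WithLp.ofLp_injective 2 hx, WithLp.ofLp_injective 2 hy⟩

lemma exists_isometry_append_map {s₁ s₂ m n : ℕ} {f₁ : (𝔼 s₁) → 𝔼 m} {f₂ : (𝔼 s₂) → 𝔼 n}
    (h₁ : Isometry f₁) (h₂ : Isometry f₂) :
    ∃ F : (𝔼 (s₁ + s₂)) → 𝔼 (m + n), Isometry F ∧ ∀ x y, F (append x y) = append (f₁ x) (f₂ y) := by
  set F : (𝔼 (s₁ + s₂)) → 𝔼 (m + n) := fun z =>
    append (f₁ (WithLp.toLp 2 fun i => z (Fin.castAdd s₂ i)))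
      (f₂ (WithLp.toLp 2 fun i => z (Fin.natAdd s₁ i)))
  have hF : ∀ x y, F (append x y) = append (f₁ x) (f₂ y) := fun x y => by simp [F, append]
  refine ⟨F, Isometry.of_dist_eq fun z w => ?_, hF⟩
  obtain ⟨x, y, rfl⟩ := exists_append_eq z
  obtain ⟨x', y', rfl⟩ := exists_append_eq w
  rw [hF, hF, ← sq_eq_sq₀ dist_nonneg dist_nonneg, dist_append_sq, dist_append_sq, h₁.dist_eq,
    h₂.dist_eq]

end EuclideanSpace

open EuclideanSpace

lemma append_mem_cuboid_append {m n : ℕ} {a₁ : Fin m → ℝ} {a₂ : Fin n → ℝ} {x : 𝔼 m} {y : 𝔼 n} :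
    append x y ∈ cuboid (Fin.append a₁ a₂) ↔ x ∈ cuboid a₁ ∧ y ∈ cuboid a₂ := by
  simp [cuboid, append, Fin.forall_fin_add]

lemma cuboid_append {m n : ℕ} (a₁ : Fin m → ℝ) (a₂ : Fin n → ℝ) :
    cuboid (Fin.append a₁ a₂) = image2 append (cuboid a₁) (cuboid a₂) := by
  ext z
  obtain ⟨x, y, rfl⟩ := exists_append_eq z
  rw [mem_image2_iff append_injective2, append_mem_cuboid_append]

section Colourings

variable {α β κ : Type*} {χ : β → κ} {X : Set α} {f : α → β}

lemma monochromatic_image : Monochromatic χ (f '' X) ↔ Monochromatic (χ ∘ f) X := by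
  simp [Monochromatic]

lemma Monochromatic.comp {χ : α → β} (h : Monochromatic χ X) (g : β → κ) :
    Monochromatic (g ∘ χ) X :=
  fun x hx y hy => congrArg g (h x hx y hy)

lemma Monochromatic.congr {χ χ' : α → κ} (h : Monochromatic χ X) (hχ : EqOn χ χ' X) :
    Monochromatic χ' X :=
  fun x hx y hy => (hχ hx).symm.trans ((h x hx y hy).trans (hχ hy))

lemma Monochromatic.pair {χ : α → κ} {x y : α} (h : χ x = χ y) : Monochromatic χ {x, y} := by
  rintro _ (rfl | rfl) _ (rfl | rfl) <;> simp [h]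

lemma Set.Subsingleton.monochromatic (hX : X.Subsingleton) (χ : α → κ) : Monochromatic χ X :=
  fun _ hx _ hy => congrArg χ (hX hx hy)

end Colourings

section Copies

variable {s n m : ℕ} {C : Set (𝔼 s)} {X : Set (𝔼 n)}

lemma IsCopy.image (h : IsCopy C X) {g : (𝔼 n) → 𝔼 m} (hg : Isometry g) : IsCopy C (g '' X) := by
  obtain ⟨f, hf, rfl⟩ := h
  exact ⟨g ∘ f, hg.comp hf, (image_comp g f C).symm⟩

lemma IsCopy.nonempty (h : IsCopy C X) (hC : C.Nonempty) : X.Nonempty := by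
  obtain ⟨f, -, rfl⟩ := h
  exact hC.image f

lemma IsCopy.image2_append {s₁ s₂ n₁ n₂ : ℕ} {C₁ : Set (𝔼 s₁)} {C₂ : Set (𝔼 s₂)}
    {X₁ : Set (𝔼 n₁)} {X₂ : Set (𝔼 n₂)} (h₁ : IsCopy C₁ X₁) (h₂ : IsCopy C₂ X₂) :
    IsCopy (image2 append C₁ C₂) (image2 append X₁ X₂) := by
  obtain ⟨f₁, hf₁, rfl⟩ := h₁
  obtain ⟨f₂, hf₂, rfl⟩ := h₂
  obtain ⟨F, hF, hFf⟩ := exists_isometry_append_map hf₁ hf₂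
  exact ⟨F, hF, by simp only [image_image2, hFf, image2_image_left, image2_image_right]⟩

end Copies

lemma monochromatic_image2_append {N₁ N₂ : ℕ} {κ : Type*} {χ : (𝔼 (N₁ + N₂)) → κ}
    {X : Set (𝔼 N₁)} {Y : Set (𝔼 N₂)} {y₀ : 𝔼 N₂} (hy₀ : y₀ ∈ Y)
    (hX : Monochromatic (fun x => χ (append x y₀)) X)
    (hY : ∀ x ∈ X, Monochromatic (χ ∘ append x) Y) : Monochromatic χ (image2 append X Y) := by
  rintro _ ⟨x, hx, y, hy, rfl⟩ _ ⟨x', hx', y', hy', rfl⟩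
  exact (hY x hx y hy y₀ hy₀).trans ((hX x hx x' hx').trans (hY x' hx' y₀ hy₀ y' hy'))

def ForcesMonoOrRainbow (κ₀ : Type) {s r N : ℕ} (C : Set (𝔼 s)) (R : Set (𝔼 r))
    (T : Set (𝔼 N)) : Prop :=
  ∀ (χ₀ : (𝔼 N) → κ₀) (κ : Type) (χ : (𝔼 N) → κ),
    (∃ X ⊆ T, IsCopy C X ∧ Monochromatic χ₀ X ∧ Monochromatic χ X) ∨
    (∃ X ⊆ T, IsCopy R X ∧ Monochromatic χ₀ X ∧ RainbowSet χ X)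

theorem ForcesMonoOrRainbow.image2_append {κ₀ : Type} {s₁ s₂ r N₁ N₂ : ℕ} {C₁ : Set (𝔼 s₁)}
    {C₂ : Set (𝔼 s₂)} {R : Set (𝔼 r)} {T₁ : Set (𝔼 N₁)} {T₂ : Set (𝔼 N₂)}
    (hC₁ : C₁.Nonempty) (hC₂ : C₂.Nonempty) (hR : R.Nonempty)
    (h₁ : ForcesMonoOrRainbow (κ₀ × Set T₂) C₁ R T₁) (h₂ : ForcesMonoOrRainbow κ₀ C₂ R T₂) :
    ForcesMonoOrRainbow κ₀ (image2 append C₁ C₂) R (image2 append T₁ T₂) := by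
  intro χ₀ κ χ
  by_cases hfibre : ∃ x ∈ T₁, ¬∃ Y ⊆ T₂, IsCopy C₂ Y ∧ Monochromatic (χ₀ ∘ append x) Y ∧
      Monochromatic (χ ∘ append x) Y
  · obtain ⟨x, hx, hno⟩ := hfibre
    obtain ⟨Y, hYT, hY, hY₀, hYχ⟩ := (h₂ (χ₀ ∘ append x) κ (χ ∘ append x)).resolve_left hno
    exact Or.inr ⟨append x '' Y, image_subset_iff.2 fun y hy => mem_image2_of_mem hx (hYT hy),
      hY.image (isometry_append_right x), monochromatic_image.2 hY₀, hYχ.image_of_comp⟩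
  push Not at hfibre
  -- In each fibre `{x} × T₂` pick a doubly monochromatic copy `Y x` of `C₂` and a point `y₀ x` of
  -- it; colour `T₁` by the colour of that point and by `Y x`.
  choose! Y hYT hY hY₀ hYχ using hfibre
  set y₀ : (𝔼 N₁) → 𝔼 N₂ := fun x => Classical.epsilon (· ∈ Y x)
  have hy₀ : ∀ x ∈ T₁, y₀ x ∈ Y x := fun x hx => Classical.epsilon_spec ((hY x hx).nonempty hC₂)
  set χ₀' : (𝔼 N₁) → κ₀ × Set T₂ := fun x => (χ₀ (append x (y₀ x)), Subtype.val ⁻¹' Y x)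
  have hconst : ∀ X ⊆ T₁, Monochromatic χ₀' X → ∀ x ∈ X, ∀ x' ∈ X, Y x = Y x' ∧ y₀ x = y₀ x' := by
    intro X hXT hX x hx x' hx'
    have hYx := (Subtype.preimage_val_eq_preimage_val_iff _ _ _).1 (congrArg Prod.snd (hX x hx x' hx'))
    rw [inter_eq_right.2 (hYT x (hXT hx)), inter_eq_right.2 (hYT x' (hXT hx'))] at hYx
    exact ⟨hYx, by simp only [y₀, hYx]⟩
  rcases h₁ χ₀' κ (fun x => χ (append x (y₀ x))) with
    ⟨X, hXT, hX, hX₀, hXχ⟩ | ⟨X, hXT, hX, hX₀, hXχ⟩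
  · obtain ⟨x₀, hx₀⟩ := hX.nonempty hC₁
    have hYX (x) (hx : x ∈ X) := hconst X hXT hX₀ x hx x₀ hx₀
    have hy₀x₀ := hy₀ x₀ (hXT hx₀)
    refine Or.inl ⟨image2 append X (Y x₀), image2_subset hXT (hYT x₀ (hXT hx₀)),
      hX.image2_append (hY x₀ (hXT hx₀)), monochromatic_image2_append hy₀x₀
        ((hX₀.comp Prod.fst).congr fun x hx => by simp [χ₀', (hYX x hx).2]) fun x hx => ?_,
      monochromatic_image2_append hy₀x₀ (hXχ.congr fun x hx => by simp [(hYX x hx).2])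
        fun x hx => ?_⟩
    · exact (hYX x hx).1 ▸ hY₀ x (hXT hx)
    · exact (hYX x hx).1 ▸ hYχ x (hXT hx)
  · obtain ⟨x₀, hx₀⟩ := hX.nonempty hR
    have hy₀X (x) (hx : x ∈ X) := (hconst X hXT hX₀ x hx x₀ hx₀).2
    exact Or.inr ⟨(append · (y₀ x₀)) '' X, image_subset_iff.2 fun x hx =>
      mem_image2_of_mem (hXT hx) (hYT x₀ (hXT hx₀) (hy₀ x₀ (hXT hx₀))),
      hX.image (isometry_append_left _),
      monochromatic_image.2 ((hX₀.comp Prod.fst).congr fun x hx => by simp [χ₀', hy₀X x hx]),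
      (hXχ.congr fun x hx => by simp [hy₀X x hx]).image_of_comp⟩

lemma cuboid_nonempty {s : ℕ} (a : Fin s → ℝ) : (cuboid a).Nonempty :=
  ⟨0, fun _ => Or.inl rfl⟩

lemma isCopy_cuboid_pair {N : ℕ} {a : Fin 1 → ℝ} (ha : 0 < a 0) {y₁ y₂ : 𝔼 N}
    (hy : dist y₁ y₂ = a 0) : IsCopy (cuboid a) {y₁, y₂} := by
  refine ⟨fun x => y₁ + (x 0 / a 0) • (y₂ - y₁), Isometry.of_dist_eq fun x x' => ?_, ?_⟩
  · rw [dist_add_left, dist_eq_norm, ← sub_smul, norm_smul, ← dist_eq_norm' y₁ y₂, hy,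
      Real.norm_eq_abs, ← sub_div, abs_div, abs_of_pos ha, div_mul_cancel₀ _ ha.ne',
      EuclideanSpace.dist_eq, Fin.sum_univ_one, Real.sqrt_sq_eq_abs, Real.dist_eq, abs_abs]
  · ext y
    simp only [cuboid, Fin.forall_fin_one, mem_image, mem_ofPred_eq, mem_insert_iff,
      mem_singleton_iff]
    constructor
    · rintro (rfl | rfl)
      · exact ⟨0, Or.inl rfl, by simp⟩
      · exact ⟨EuclideanSpace.single 0 (a 0), Or.inr (by simp), by simp [ha.ne']⟩
    · rintro ⟨x, hx | hx, rfl⟩ <;> simp [hx, ha.ne']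

lemma forcesMonoOrRainbow_cuboid_fin_zero (κ₀ : Type) {r : ℕ} (a : Fin 0 → ℝ) (R : Set (𝔼 r)) :
    ForcesMonoOrRainbow κ₀ (cuboid a) R ({0} : Set (𝔼 1)) := by
  refine fun χ₀ κ χ => Or.inl ⟨{0}, subset_rfl, ⟨fun _ => 0, isometry_subsingleton, ?_⟩,
    subsingleton_singleton.monochromatic χ₀, subsingleton_singleton.monochromatic χ⟩
  exact ((cuboid_nonempty a).image_const 0).symm

lemma exists_embedding_fin_const (κ₀ : Type) [Finite κ₀] (m : ℕ)
    (χ : Fin (Nat.card κ₀ * m + 1) → κ₀) :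
    ∃ φ : Fin m ↪ Fin (Nat.card κ₀ * m + 1), ∀ i j, χ (φ i) = χ (φ j) := by
  classical
  have := Fintype.ofFinite κ₀
  obtain ⟨y, hy⟩ := Fintype.exists_lt_card_fiber_of_mul_lt_card χ (n := m)
    (by simp [Nat.card_eq_fintype_card])
  obtain ⟨e⟩ := Function.Embedding.nonempty_of_card_le (α := Fin m) (β := {x // χ x = y})
    (by simpa [Fintype.card_subtype] using hy.le)
  exact ⟨e.trans (Function.Embedding.subtype _), fun i j => (e i).2.trans (e j).2.symm⟩

theorem exists_embedding_box_const (β : Type) [Fintype β] (m : ℕ) (κ₀ : Type) [Finite κ₀] :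
    ∃ n : β → ℕ, ∀ χ₀ : (∀ c, Fin (n c)) → κ₀, ∃ φ : ∀ c, Fin m ↪ Fin (n c),
      ∀ g g' : β → Fin m, χ₀ (fun c => φ c (g c)) = χ₀ (fun c => φ c (g' c)) := by
  revert κ₀
  refine Fintype.induction_empty_option ?_ ?_ ?_ β
  · intro α β _ e h κ₀ _
    obtain ⟨n, hn⟩ := h κ₀
    refine ⟨fun c => n (e.symm c), fun χ₀ => ?_⟩
    obtain ⟨φ, hφ⟩ := hn fun f => χ₀ fun c => f (e.symm c)
    refine ⟨fun c => φ (e.symm c), fun g g' => ?_⟩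
    simpa using hφ (g ∘ e) (g' ∘ e)
  · intro κ₀ _
    exact ⟨PEmpty.elim, fun χ₀ => ⟨fun c : PEmpty => c.elim,
      fun g g' => congrArg χ₀ (funext fun c : PEmpty => c.elim)⟩⟩
  · intro α _ h κ₀ _
    -- The size of the new coordinate is fixed first; the others are handled by the inductive
    -- hypothesis for the colouring by whole slices along the new coordinate.
    obtain ⟨n, hn⟩ := h (Fin (Nat.card ((α → Fin m) → κ₀) * m + 1) → κ₀)
    refine ⟨fun c => c.elim (Nat.card ((α → Fin m) → κ₀) * m + 1) n, fun χ₀ => ?_⟩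
    set χ₀' : (∀ c, Fin (n c)) → Fin (Nat.card ((α → Fin m) → κ₀) * m + 1) → κ₀ :=
      fun f i => χ₀ fun c => match c with | none => i | some c => f c
    obtain ⟨φ, hφ⟩ := hn χ₀'
    obtain ⟨φ₀, hφ₀⟩ := exists_embedding_fin_const ((α → Fin m) → κ₀) m
      fun i g => χ₀' (fun c => φ c (g c)) i
    let Φ : ∀ c : Option α, Fin m ↪ Fin (c.elim (Nat.card ((α → Fin m) → κ₀) * m + 1) n) := fun c =>
      match c with | none => φ₀ | some c => φ c
    have hslice : ∀ G : Option α → Fin m, χ₀ (fun c => Φ c (G c)) =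
        χ₀' (fun c => φ c (G (some c))) (φ₀ (G none)) := fun G => by
      congr 1; funext c; cases c <;> rfl
    refine ⟨Φ, fun G G' => ?_⟩
    calc _ = χ₀' (fun c => φ c (G (some c))) (φ₀ (G none)) := hslice G
      _ = χ₀' (fun c => φ c (G' (some c))) (φ₀ (G none)) := congrFun (hφ _ _) _
      _ = χ₀' (fun c => φ c (G' (some c))) (φ₀ (G' none)) :=
        congrFun (hφ₀ (G none) (G' none)) fun c => G' (some c)
      _ = _ := (hslice G').symm

section CuboidVertex

variable {J : Type*} {γ : J × Bool → Type*}

def cuboidVertex (e₀ e₁ : ∀ c, γ c) (ε : J → Bool) : ∀ c, γ c :=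
  fun c => if ε c.1 then e₁ c else e₀ c

lemma cuboidVertex_map {δ : J × Bool → Type*} (φ : ∀ c, γ c → δ c) (e₀ e₁ : ∀ c, γ c)
    (ε : J → Bool) :
    cuboidVertex (fun c => φ c (e₀ c)) (fun c => φ c (e₁ c)) ε =
      fun c => φ c (cuboidVertex e₀ e₁ ε c) := by
  funext c
  simp only [cuboidVertex]
  split_ifs <;> rfl

lemma cuboidVertex_update_of_true [DecidableEq J] {e₀ e₁ : ∀ c, γ c} {ε : J → Bool} {j : J}
    (hj : ε j = true) (v : γ (j, true)) :
    cuboidVertex e₀ (Function.update e₁ (j, true) v) ε =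
      Function.update (cuboidVertex e₀ e₁ ε) (j, true) v := by
  funext c
  by_cases hc : c = (j, true)
  · subst hc; simp [cuboidVertex, hj]
  · simp [cuboidVertex, Function.update_of_ne hc]

lemma cuboidVertex_update_of_false [DecidableEq J] {e₀ e₁ : ∀ c, γ c} {ε : J → Bool} {j : J}
    (hj : ε j = false) (v : γ (j, true)) :
    cuboidVertex e₀ (Function.update e₁ (j, true) v) ε = cuboidVertex e₀ e₁ ε := by
  funext c
  by_cases hc : c = (j, true)
  · subst hc; simp [cuboidVertex, hj]
  · simp [cuboidVertex, Function.update_of_ne hc]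

end CuboidVertex

section RainbowVertices

variable {J : Type*} [DecidableEq J] {m : ℕ} {κ : Type*} {χ : (J × Bool → Fin m) → κ}

variable (χ) in
def InjectiveAlongLines : Prop :=
  ∀ g j, Function.Injective fun v => χ (Function.update g (j, true) v)

/-- Along a line in direction `(j, true)` only the vertex on the `true` side of block `j` moves. -/
lemma eq_of_cuboidVertex_update (hχ : InjectiveAlongLines χ)
    {e₀ e₁ : J × Bool → Fin m} {ε ε' : J → Bool} {j : J} (hε : ε j = true) (hε' : ε' j = false)
    {v w : Fin m}
    (hv : χ (cuboidVertex e₀ (Function.update e₁ (j, true) v) ε) =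
      χ (cuboidVertex e₀ (Function.update e₁ (j, true) v) ε'))
    (hw : χ (cuboidVertex e₀ (Function.update e₁ (j, true) w) ε) =
      χ (cuboidVertex e₀ (Function.update e₁ (j, true) w) ε')) : v = w := by
  rw [cuboidVertex_update_of_true hε, cuboidVertex_update_of_false hε'] at hv hw
  exact hχ _ _ (hv.trans hw.symm)

variable [Fintype J]

variable (J m) in
def spanningPairs : Finset ((J × Bool → Fin m) × (J × Bool → Fin m)) :=
  Finset.univ.filter fun q => ∀ c, q.1 c ≠ q.2 c

lemma card_fiber_update_le {q : (J × Bool → Fin m) × (J × Bool → Fin m)}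
    (hq : q ∈ spanningPairs J m) (j : J) :
    m - 1 ≤ #{q' ∈ spanningPairs J m |
      (q'.1, Function.update q'.2 (j, true) (q'.1 (j, true))) =
        (q.1, Function.update q.2 (j, true) (q.1 (j, true)))} := by
  classical
  have hq' : ∀ c, q.1 c ≠ q.2 c := (Finset.mem_filter.1 hq).2
  calc m - 1 = #((Finset.univ : Finset (Fin m)).erase (q.1 (j, true))) := by simp
    _ ≤ _ := by
      refine Finset.card_le_card_of_injOn (fun v => (q.1, Function.update q.2 (j, true) v))
        (fun v hv => ?_) fun v _ w _ h => by simpa using congrFun (congrArg Prod.snd h) (j, true)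
      have hv : v ≠ q.1 (j, true) := Finset.ne_of_mem_erase hv
      refine Finset.mem_filter.2 ⟨Finset.mem_filter.2 ⟨Finset.mem_univ _, fun c => ?_⟩, by simp⟩
      by_cases hc : c = (j, true)
      · subst hc; simpa [eq_comm] using hv
      · simpa [Function.update_of_ne hc] using hq' c

open Classical in
lemma card_filter_cuboidVertex_eq_le_of_eq_true_of_eq_false (hχ : InjectiveAlongLines χ)
    {ε ε' : J → Bool} {j : J} (hε : ε j = true) (hε' : ε' j = false) :
    (m - 1) * #{q ∈ spanningPairs J m |
      χ (cuboidVertex q.1 q.2 ε) = χ (cuboidVertex q.1 q.2 ε')} ≤ #(spanningPairs J m) := by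
  set B := {q ∈ spanningPairs J m | χ (cuboidVertex q.1 q.2 ε) = χ (cuboidVertex q.1 q.2 ε')}
  set π := fun q : (J × Bool → Fin m) × (J × Bool → Fin m) =>
    (q.1, Function.update q.2 (j, true) (q.1 (j, true)))
  have hπ : Set.InjOn π B := by
    rintro ⟨e₀, e₁⟩ hq ⟨e₀', e₁'⟩ hq' h
    simp only [π, Prod.mk.injEq] at h
    obtain ⟨rfl, h⟩ := h
    have he₁ : e₁' = Function.update e₁ (j, true) (e₁' (j, true)) := by
      funext c
      by_cases hc : c = (j, true)
      · subst hc; simp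
      · simpa [Function.update_of_ne hc] using (congrFun h c).symm
    have hq : χ (cuboidVertex e₀ (Function.update e₁ (j, true) (e₁ (j, true))) ε) =
        χ (cuboidVertex e₀ (Function.update e₁ (j, true) (e₁ (j, true))) ε') := by
      simpa using (Finset.mem_filter.1 hq).2
    have hq' := (Finset.mem_filter.1 hq').2
    rw [he₁] at hq' ⊢
    rw [← eq_of_cuboidVertex_update hχ hε hε' hq hq', Function.update_eq_self]
  calc (m - 1) * #B ≤ (m - 1) * #((spanningPairs J m).image π) :=
        Nat.mul_le_mul_left _ (Finset.card_le_card_of_injOn π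
          (fun q hq => Finset.mem_image_of_mem π (Finset.mem_filter.1 hq).1) hπ)
    _ ≤ #(spanningPairs J m) := Finset.mul_card_image_le_card _ _ fun p hp => by
        obtain ⟨q, hq, rfl⟩ := Finset.mem_image.1 hp
        exact card_fiber_update_le hq j

open Classical in
lemma card_filter_cuboidVertex_eq_le (hχ : InjectiveAlongLines χ) {ε ε' : J → Bool}
    (hne : ε ≠ ε') :
    (m - 1) * #{q ∈ spanningPairs J m |
      χ (cuboidVertex q.1 q.2 ε) = χ (cuboidVertex q.1 q.2 ε')} ≤ #(spanningPairs J m) := by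
  obtain ⟨j, hj⟩ := Function.ne_iff.1 hne
  cases hε : ε j
  · have hε' : ε' j = true := by simpa [hε] using hj
    simpa only [eq_comm] using card_filter_cuboidVertex_eq_le_of_eq_true_of_eq_false hχ hε' hε
  · have hε' : ε' j = false := by simpa [hε] using hj
    exact card_filter_cuboidVertex_eq_le_of_eq_true_of_eq_false hχ hε hε'

/-- Each pair of vertices gets equal colours for at most a `1 / (m - 1)` fraction of the spanning
pairs, and there are fewer than `m - 1` pairs of vertices. -/
theorem exists_spanningPairs_injective_cuboidVertex
    (hm : Fintype.card ((J → Bool) × (J → Bool)) < m) (hχ : InjectiveAlongLines χ) :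
    ∃ q ∈ spanningPairs J m, Function.Injective fun ε => χ (cuboidVertex q.1 q.2 ε) := by
  classical
  set K := spanningPairs J m
  set P := (Finset.univ : Finset ((J → Bool) × (J → Bool))).filter fun p => p.1 ≠ p.2
  set bad := P.biUnion fun p =>
    {q ∈ K | χ (cuboidVertex q.1 q.2 p.1) = χ (cuboidVertex q.1 q.2 p.2)}
  have hP : #P + 1 < m := by
    have : #P < Fintype.card ((J → Bool) × (J → Bool)) :=
      Finset.card_lt_card (Finset.filter_ssubset.2 ⟨(fun _ => true, fun _ => true), by simp⟩)
    omega
  have hK : 0 < #K := Finset.card_pos.2 ⟨(fun _ => ⟨0, by omega⟩, fun _ => ⟨1, by omega⟩),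
    Finset.mem_filter.2 ⟨Finset.mem_univ _, fun _ => by simp [Fin.ext_iff]⟩⟩
  have hbad : (m - 1) * #bad < (m - 1) * #K :=
    calc (m - 1) * #bad
        ≤ ∑ p ∈ P, (m - 1) *
            #{q ∈ K | χ (cuboidVertex q.1 q.2 p.1) = χ (cuboidVertex q.1 q.2 p.2)} := by
          rw [← Finset.mul_sum]; exact Nat.mul_le_mul_left _ Finset.card_biUnion_le
      _ ≤ ∑ _p ∈ P, #K := Finset.sum_le_sum fun p hp =>
          card_filter_cuboidVertex_eq_le hχ (Finset.mem_filter.1 hp).2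
      _ = #P * #K := by rw [Finset.sum_const, smul_eq_mul]
      _ < (m - 1) * #K := Nat.mul_lt_mul_of_pos_right (by omega) hK
  obtain ⟨q, hqK, hq⟩ := Finset.exists_mem_notMem_of_card_lt_card (lt_of_mul_lt_mul_left' hbad)
  refine ⟨q, hqK, fun ε ε' h => ?_⟩
  by_contra hne
  exact hq (Finset.mem_biUnion.2 ⟨(ε, ε'), Finset.mem_filter.2 ⟨Finset.mem_univ _, hne⟩,
    Finset.mem_filter.2 ⟨hqK, h⟩⟩)

end RainbowVertices

lemma sum_sq_ite_sub_ite {ι : Type*} [Fintype ι] [DecidableEq ι] (a b : ι) (r : ℝ) :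
    ∑ i, ((if i = a then r else 0) - (if i = b then r else 0)) ^ 2 =
      if a = b then 0 else 2 * r ^ 2 := by
  split_ifs with h
  · simp [h]
  · rw [← Finset.sum_subset (Finset.subset_univ {a, b}) fun i _ hi => by
      simp only [Finset.mem_insert, Finset.mem_singleton, not_or] at hi; simp [hi.1, hi.2],
      Finset.sum_pair h]
    simp [h, Ne.symm h]
    ring

section Grid

variable {β : Type*} {n : β → ℕ} {w : β → ℝ}

noncomputable def gridPoint (w : β → ℝ) (f : ∀ c, Fin (n c)) :
    EuclideanSpace ℝ (Σ c, Fin (n c)) :=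
  WithLp.toLp 2 fun i => if i.2 = f i.1 then √(w i.1 / 2) else 0

lemma sum_sq_gridPoint_sub {c : β} (hw : 0 ≤ w c) (f g : ∀ c, Fin (n c)) :
    ∑ k : Fin (n c), (gridPoint w f ⟨c, k⟩ - gridPoint w g ⟨c, k⟩) ^ 2 =
      if f c = g c then 0 else w c := by
  simp only [gridPoint, PiLp.toLp_apply, sum_sq_ite_sub_ite]
  rw [Real.sq_sqrt (by linarith)]
  split_ifs <;> ring

lemma dist_gridPoint_sq [Fintype β] (hw : ∀ c, 0 ≤ w c) (f g : ∀ c, Fin (n c)) :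
    dist (gridPoint w f) (gridPoint w g) ^ 2 = ∑ c, if f c = g c then 0 else w c := by
  rw [EuclideanSpace.dist_eq, Real.sq_sqrt (by positivity), Fintype.sum_sigma]
  exact Finset.sum_congr rfl fun c _ => by
    simpa only [Real.dist_eq, sq_abs] using sum_sq_gridPoint_sub (hw c) f g

lemma dist_gridPoint_update [Fintype β] [DecidableEq β] (hw : ∀ c, 0 ≤ w c)
    (f : ∀ c, Fin (n c)) {c : β} {v v' : Fin (n c)} (hv : v ≠ v') :
    dist (gridPoint w (Function.update f c v)) (gridPoint w (Function.update f c v')) = √(w c) := by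
  rw [← Real.sqrt_sq dist_nonneg, dist_gridPoint_sq hw, Finset.sum_eq_single c]
  · simp [hv]
  · intro c' _ hc'
    simp [Function.update_of_ne hc']
  · simp

variable {s : ℕ} {b : Fin s → ℝ} {α : ℝ} {n : Fin s × Bool → ℕ}

def blockWeight (b : Fin s → ℝ) (α : ℝ) (c : Fin s × Bool) : ℝ :=
  if c.2 then α ^ 2 else b c.1 ^ 2 - α ^ 2

lemma blockWeight_nonneg (hα : 0 ≤ α) (hαb : ∀ j, α ≤ b j) (c : Fin s × Bool) :
    0 ≤ blockWeight b α c := by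
  unfold blockWeight
  split_ifs
  · positivity
  · nlinarith [hαb c.1]

noncomputable def cuboidEmbedding (b : Fin s → ℝ) (w : Fin s × Bool → ℝ) (e₀ e₁ : ∀ c, Fin (n c))
    (x : 𝔼 s) : EuclideanSpace ℝ (Σ c, Fin (n c)) :=
  WithLp.toLp 2 fun i =>
    gridPoint w e₀ i + x i.1.1 / b i.1.1 * (gridPoint w e₁ i - gridPoint w e₀ i)

lemma isometry_cuboidEmbedding (hα : 0 < α) (hαb : ∀ j, α ≤ b j) {e₀ e₁ : ∀ c, Fin (n c)}
    (he : ∀ c, e₀ c ≠ e₁ c) : Isometry (cuboidEmbedding b (blockWeight b α) e₀ e₁) := by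
  refine Isometry.of_dist_eq fun x y => ?_
  have hblock : ∀ c : Fin s × Bool, ∑ k : Fin (n c),
      dist (cuboidEmbedding b (blockWeight b α) e₀ e₁ x ⟨c, k⟩)
        (cuboidEmbedding b (blockWeight b α) e₀ e₁ y ⟨c, k⟩) ^ 2 =
      ((x c.1 - y c.1) / b c.1) ^ 2 * blockWeight b α c := fun c => by
    have h := sum_sq_gridPoint_sub (blockWeight_nonneg hα.le hαb c) e₁ e₀
    rw [if_neg (he c).symm] at h
    rw [← h, Finset.mul_sum]
    refine Finset.sum_congr rfl fun k _ => ?_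
    simp only [cuboidEmbedding, PiLp.toLp_apply, Real.dist_eq, sq_abs]
    ring
  rw [← sq_eq_sq₀ dist_nonneg dist_nonneg, EuclideanSpace.dist_eq, EuclideanSpace.dist_eq,
    Real.sq_sqrt (by positivity), Real.sq_sqrt (by positivity), Fintype.sum_sigma,
    Finset.sum_congr rfl fun c _ => hblock c, Fintype.sum_prod_type]
  refine Finset.sum_congr rfl fun j _ => ?_
  have hb : b j ≠ 0 := (hα.trans_le (hαb j)).ne'
  rw [Fintype.sum_bool, Real.dist_eq, sq_abs]
  simp only [blockWeight, if_true, Bool.false_eq_true, if_false]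
  field_simp
  ring

lemma cuboidEmbedding_eq_gridPoint (hb : ∀ j, b j ≠ 0) (w : Fin s × Bool → ℝ)
    (e₀ e₁ : ∀ c, Fin (n c)) {x : 𝔼 s} (hx : x ∈ cuboid b) :
    cuboidEmbedding b w e₀ e₁ x = gridPoint w (cuboidVertex e₀ e₁ fun j => decide (x j = b j)) := by
  have hb' : ∀ j, 0 ≠ b j := fun j => (hb j).symm
  ext i
  rcases hx i.1.1 with h | h <;>
    simp [cuboidEmbedding, gridPoint, cuboidVertex, h, hb, hb']

lemma injOn_decide_eq_cuboid :
    InjOn (fun x : 𝔼 s => fun j => decide (x j = b j)) (cuboid b) := by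
  intro x hx y hy h
  ext j
  have hj := congrFun h j
  rcases hx j with hxj | hxj <;> rcases hy j with hyj | hyj <;> simp_all

end Grid

theorem exists_gridPoint_pair_or_rainbow_cuboid {s : ℕ} (b : Fin s → ℝ) {α : ℝ} (hα : 0 < α)
    (hαb : ∀ j, α ≤ b j) (κ₀ : Type) [Finite κ₀] :
    ∃ n : Fin s × Bool → ℕ, ∀ (χ₀ : EuclideanSpace ℝ (Σ c, Fin (n c)) → κ₀) (κ : Type)
      (χ : EuclideanSpace ℝ (Σ c, Fin (n c)) → κ),
      (∃ f g, dist (gridPoint (blockWeight b α) f) (gridPoint (blockWeight b α) g) = α ∧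
        χ₀ (gridPoint (blockWeight b α) f) = χ₀ (gridPoint (blockWeight b α) g) ∧
        χ (gridPoint (blockWeight b α) f) = χ (gridPoint (blockWeight b α) g)) ∨
      (∃ F : (𝔼 s) → EuclideanSpace ℝ (Σ c, Fin (n c)), Isometry F ∧
        F '' cuboid b ⊆ range (gridPoint (blockWeight b α)) ∧
        Monochromatic χ₀ (F '' cuboid b) ∧ RainbowSet χ (F '' cuboid b)) := by
  classical
  set w := blockWeight b α
  set m := Fintype.card ((Fin s → Bool) × (Fin s → Bool)) + 1
  obtain ⟨n, hn⟩ := exists_embedding_box_const (Fin s × Bool) m κ₀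
  refine ⟨n, fun χ₀ κ χ => ?_⟩
  obtain ⟨φ, hφ⟩ := hn (χ₀ ∘ gridPoint w)
  set P := fun g : Fin s × Bool → Fin m => gridPoint w fun c => φ c (g c)
  by_cases hline : InjectiveAlongLines (χ ∘ P)
  · obtain ⟨q, hq, hinj⟩ := exists_spanningPairs_injective_cuboidVertex (lt_add_one _) hline
    have hb : ∀ j, b j ≠ 0 := fun j => (hα.trans_le (hαb j)).ne'
    set F := cuboidEmbedding b w (fun c => φ c (q.1 c)) (fun c => φ c (q.2 c))
    have hF : ∀ x ∈ cuboid b, F x = P (cuboidVertex q.1 q.2 fun j => decide (x j = b j)) :=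
      fun x hx => by simp only [F, P, cuboidEmbedding_eq_gridPoint hb _ _ _ hx, cuboidVertex_map]
    refine Or.inr ⟨F, isometry_cuboidEmbedding hα hαb fun c =>
      (φ c).injective.ne ((Finset.mem_filter.1 hq).2 c), ?_, ?_, ?_⟩
    · rintro _ ⟨x, hx, rfl⟩
      exact ⟨_, (hF x hx).symm⟩
    · rintro _ ⟨x, hx, rfl⟩ _ ⟨y, hy, rfl⟩
      rw [hF x hx, hF y hy]
      exact hφ _ _
    · refine InjOn.image_of_comp ((hinj.comp_injOn injOn_decide_eq_cuboid).congr fun x hx => ?_)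
      simp [hF x hx]
  · simp only [InjectiveAlongLines, not_forall] at hline
    obtain ⟨g, j, hj⟩ := hline
    obtain ⟨v, v', hχv, hvv'⟩ := Function.not_injective_iff.1 hj
    refine Or.inl ⟨_, _, ?_, hφ _ _, hχv⟩
    simp only [Function.apply_update (fun c => (φ c : Fin _ → Fin (n c)))]
    rw [dist_gridPoint_update (blockWeight_nonneg hα.le hαb) _ ((φ _).injective.ne hvv')]
    simp [blockWeight, hα.le]

theorem exists_forcesMonoOrRainbow_cuboid_fin_one {s : ℕ} (b : Fin s → ℝ) {a : Fin 1 → ℝ}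
    (ha : 0 < a 0) (hab : ∀ j, a 0 ≤ b j) (κ₀ : Type) [Finite κ₀] :
    ∃ N, ∃ T : Set (𝔼 N), T.Finite ∧ ForcesMonoOrRainbow κ₀ (cuboid a) (cuboid b) T := by
  obtain ⟨n, hn⟩ := exists_gridPoint_pair_or_rainbow_cuboid b ha hab κ₀
  set e := LinearIsometryEquiv.piLpCongrLeft 2 ℝ ℝ (Fintype.equivFin (Σ c, Fin (n c)))
  refine ⟨_, range (e ∘ gridPoint (blockWeight b (a 0))), finite_range _, fun χ₀ κ χ => ?_⟩
  rcases hn (χ₀ ∘ e) κ (χ ∘ e) with ⟨f, g, hfg, h₀, h⟩ | ⟨F, hF, hFT, hF₀, hFχ⟩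
  · exact Or.inl ⟨_, pair_subset (mem_range_self f) (mem_range_self g),
      isCopy_cuboid_pair ha ((e.isometry.dist_eq _ _).trans hfg), Monochromatic.pair h₀,
      Monochromatic.pair h⟩
  · refine Or.inr ⟨e '' (F '' cuboid b), ?_, ⟨e ∘ F, e.isometry.comp hF, (image_comp e F _).symm⟩,
      monochromatic_image.2 hF₀, hFχ.image_of_comp⟩
    rw [range_comp]
    exact image_mono hFT

theorem exists_forcesMonoOrRainbow_cuboid {s : ℕ} (b : Fin s → ℝ) :
    ∀ {t : ℕ} (a : Fin t → ℝ), (∀ i, 0 < a i) → (∀ i j, a i ≤ b j) → ∀ (κ₀ : Type) [Finite κ₀],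
      ∃ N, 0 < N ∧ ∃ T : Set (𝔼 N), T.Finite ∧ ForcesMonoOrRainbow κ₀ (cuboid a) (cuboid b) T
  | 0, a, _, _, κ₀, _ =>
    ⟨1, one_pos, {0}, finite_singleton 0, forcesMonoOrRainbow_cuboid_fin_zero κ₀ a _⟩
  | t + 1, a, ha, hab, κ₀, _ => by
    obtain ⟨N₂, T₂, hT₂, h₂⟩ := exists_forcesMonoOrRainbow_cuboid_fin_one b
      (a := fun i => a (Fin.natAdd t i)) (ha _) (hab _) κ₀
    have := hT₂.to_subtype
    obtain ⟨N₁, hN₁, T₁, hT₁, h₁⟩ := exists_forcesMonoOrRainbow_cuboid b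
      (fun i => a (Fin.castAdd 1 i)) (fun _ => ha _) (fun _ => hab _) (κ₀ × Set T₂)
    refine ⟨N₁ + N₂, by omega, image2 append T₁ T₂, hT₁.image2 _ hT₂, ?_⟩
    rw [← Fin.append_castAdd_natAdd (f := a), cuboid_append]
    exact h₁.image2_append (cuboid_nonempty _) (cuboid_nonempty _) (cuboid_nonempty b) h₂

theorem exists_config_mono_cuboid_or_rainbow_cuboid_general (s : ℕ) (b : Fin s → ℝ) (t : ℕ)
    (a : Fin t → ℝ) (ha : ∀ i, 0 < a i) (hab : ∀ i j, a i ≤ b j) :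
    ∃ N : ℕ, 0 < N ∧ ∃ S : Set (EuclideanSpace ℝ (Fin N)), S.Finite ∧
      ∀ (κ : Type) (χ : EuclideanSpace ℝ (Fin N) → κ),
        (∃ X ⊆ S, IsCopy (cuboid a) X ∧ Monochromatic χ X) ∨
        (∃ X ⊆ S, IsCopy (cuboid b) X ∧ RainbowSet χ X) := by
  obtain ⟨N, hN, S, hS, hforces⟩ := exists_forcesMonoOrRainbow_cuboid b a ha hab Unit
  refine ⟨N, hN, S, hS, fun κ χ => ?_⟩
  rcases hforces (fun _ => ()) κ χ with ⟨X, hXS, hX, -, hXχ⟩ | ⟨X, hXS, hX, -, hXχ⟩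
  exacts [Or.inl ⟨X, hXS, hX, hXχ⟩, Or.inr ⟨X, hXS, hX, hXχ⟩]

/-- **The key product construction.** Let `R = {0,b₁} × ⋯ × {0,bₛ}` be a cuboid and
`a₁, …, aₜ` positive reals each at most `min{b₁,…,bₛ}`. Then there is a finite
configuration `S ⊆ ℝᴺ` such that every colouring of `S` (with arbitrarily many
colours) admits a monochromatic copy of `{0,a₁} × ⋯ × {0,aₜ}` or a rainbow copy
of `R`. -/
theorem exists_config_mono_cuboid_or_rainbow_cuboid (s : ℕ) (hs : 0 < s)
    (b : Fin s → ℝ) (hb : ∀ i, 0 < b i)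
    (t : ℕ) (ht : 0 < t) (a : Fin t → ℝ) (ha : ∀ i, 0 < a i)
    (hab : ∀ i j, a i ≤ b j) :
    ∃ N : ℕ, 0 < N ∧ ∃ S : Set (EuclideanSpace ℝ (Fin N)), S.Finite ∧
      ∀ (κ : Type) (χ : EuclideanSpace ℝ (Fin N) → κ),
        (∃ X ⊆ S, IsCopy (cuboid a) X ∧ Monochromatic χ X) ∨
        (∃ X ⊆ S, IsCopy (cuboid b) X ∧ RainbowSet χ X) :=
  exists_config_mono_cuboid_or_rainbow_cuboid_general s b t a ha hab
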